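/- arXiv:1708.07649 — 5 statements merged into one kernel-verified Lean document; each statement's English description precedes it below -/
import Mathlib

section
/- For any unit vector v ∈ ℝ³ and angle θ ∈ ℝ, the matrix exponential of θv̂ equals I + sin(θ) v̂ + (1 − cos θ) v̂² (Rodrigues' formula). -/
open Matrix Real

noncomputable def hat (v : Fin 3 → ℝ) : Matrix (Fin 3) (Fin 3) ℝ :=
  !![0, -v 2, v 1; v 2, 0, -v 0; -v 1, v 0, 0]

noncomputable def vee (A : Matrix (Fin 3) (Fin 3) ℝ) : Fin 3 → ℝ := ![A 2 1, A 0 2, A 1 0]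

/-- Frobenius norm of a 3×3 real matrix: ‖A‖ = √(tr(Aᵀ A)). -/
noncomputable def fnorm (A : Matrix (Fin 3) (Fin 3) ℝ) : ℝ := Real.sqrt ((Aᵀ * A).trace)

/-- Euclidean norm on ℝ³. -/
noncomputable def enorm (v : Fin 3 → ℝ) : ℝ := Real.sqrt (v ⬝ᵥ v)

/-- The special orthogonal group SO(3). -/
def SO3 (R : Matrix (Fin 3) (Fin 3) ℝ) : Prop := Rᵀ * R = 1 ∧ R.det = 1

/-! Since `v̂³ = -‖v‖² v̂`, for a unit vector the powers of `K = v̂` are `K^(2k+1) = (-1)^k K` and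
`K^(2k+2) = (-1)^k K²`. The odd terms of the exponential series of `θK` therefore sum to `sin θ • K`,
and the even terms to `1 + (1 - cos θ) • K²`, the cosine series with its constant term removed. -/

open scoped Nat

theorem hat_pow_three (v : Fin 3 → ℝ) : hat v ^ 3 = -(v ⬝ᵥ v) • hat v := by
  ext i j
  fin_cases i <;> fin_cases j <;>
    simp [hat, pow_succ, Matrix.mul_apply, Fin.sum_univ_three, dotProduct] <;> ring

section PowThreeEqNeg

variable {A : Type*} [Ring A] {K : A}

theorem pow_odd_of_pow_three_eq_neg (h : K ^ 3 = -K) (k : ℕ) :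
    K ^ (2 * k + 1) = (-1) ^ k * K := by
  induction k with
  | zero => simp
  | succ k ih =>
    rw [show 2 * (k + 1) + 1 = 2 * k + 1 + 2 by ring, pow_add, ih, mul_assoc, ← pow_succ' K 2, h,
      pow_succ, mul_neg_one, neg_mul, mul_neg]

theorem pow_even_of_pow_three_eq_neg (h : K ^ 3 = -K) (k : ℕ) :
    K ^ (2 * k + 2) = (-1) ^ k * K ^ 2 := by
  rw [pow_succ, pow_odd_of_pow_three_eq_neg h, mul_assoc, sq]

end PowThreeEqNeg

theorem neg_one_pow_mul_eq_smul (R : Type*) {A : Type*} [CommRing R] [Ring A] [Algebra R A]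
    (k : ℕ) (x : A) : (-1 : A) ^ k * x = ((-1 : R) ^ k) • x := by
  rw [Algebra.smul_def, map_pow, map_neg, map_one]

theorem hasSum_cos_sub_one_succ (θ : ℝ) :
    HasSum (fun k : ℕ ↦ (-1) ^ k * θ ^ (2 * k + 2) / (2 * k + 2)!) (1 - cos θ) := by
  have h := ((hasSum_nat_add_iff' 1).mpr (Real.hasSum_cos θ)).neg
  rw [Finset.sum_range_one, neg_sub] at h
  refine HasSum.congr_fun (by simpa using h) fun k ↦ ?_
  rw [pow_succ]
  ring_nf

section ExpSeries

variable {A : Type*} [Ring A] [Algebra ℝ A] [TopologicalSpace A] [ContinuousSMul ℝ A] {K : A}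

theorem hasSum_expSeries_even_of_pow_three_eq_neg [IsTopologicalAddGroup A] (h : K ^ 3 = -K)
    (θ : ℝ) :
    HasSum (fun k ↦ ((2 * k)! ⁻¹ : ℝ) • (θ • K) ^ (2 * k)) (1 + (1 - cos θ) • K ^ 2) := by
  rw [← hasSum_nat_add_iff' 1, Finset.sum_range_one]
  simp only [mul_zero, pow_zero, Nat.factorial_zero, Nat.cast_one, inv_one, one_smul,
    add_sub_cancel_left]
  refine ((hasSum_cos_sub_one_succ θ).smul_const (K ^ 2)).congr_fun fun k ↦ ?_
  rw [mul_add, mul_one, smul_pow, pow_even_of_pow_three_eq_neg h, neg_one_pow_mul_eq_smul ℝ,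
    smul_smul, smul_smul]
  congr 1
  ring

theorem hasSum_expSeries_odd_of_pow_three_eq_neg (h : K ^ 3 = -K) (θ : ℝ) :
    HasSum (fun k ↦ ((2 * k + 1)! ⁻¹ : ℝ) • (θ • K) ^ (2 * k + 1)) (sin θ • K) := by
  refine ((Real.hasSum_sin θ).smul_const K).congr_fun fun k ↦ ?_
  rw [smul_pow, pow_odd_of_pow_three_eq_neg h, neg_one_pow_mul_eq_smul ℝ, smul_smul, smul_smul]
  congr 1
  ring

theorem exp_smul_of_pow_three_eq_neg [IsTopologicalRing A] [T2Space A] (h : K ^ 3 = -K)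
    (θ : ℝ) : NormedSpace.exp (θ • K) = 1 + sin θ • K + (1 - cos θ) • K ^ 2 := by
  rw [NormedSpace.exp_eq_tsum ℝ]
  refine (HasSum.even_add_odd (f := fun n ↦ (n ! ⁻¹ : ℝ) • (θ • K) ^ n)
    (hasSum_expSeries_even_of_pow_three_eq_neg h θ)
    (hasSum_expSeries_odd_of_pow_three_eq_neg h θ)).tsum_eq.trans ?_
  abel

end ExpSeries

theorem rodrigues_formula (θ : ℝ) (v : Fin 3 → ℝ) (hv : _root_.enorm v = 1) :
    NormedSpace.exp (θ • hat v) =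
      1 + Real.sin θ • hat v + (1 - Real.cos θ) • (hat v * hat v) := by
  have hvv : v ⬝ᵥ v = 1 := Real.sqrt_eq_one.mp hv
  have hcube : hat v ^ 3 = -hat v := by rw [hat_pow_three, hvv, neg_smul, one_smul]
  rw [← sq, exp_smul_of_pow_three_eq_neg hcube]
end

section
/- For any x ∈ ℝ³ and any 3×3 real matrix A, the vee map applied to x̂A + Aᵀx̂ gives (x̂A + Aᵀx̂)^∨ = (tr(A)·I − A)x. -/
open Matrix Real

theorem vee_hat_identity (x : Fin 3 → ℝ) (A : Matrix (Fin 3) (Fin 3) ℝ) :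
    vee (hat x * A + Aᵀ * hat x) =
      (A.trace • (1 : Matrix (Fin 3) (Fin 3) ℝ) - A).mulVec x := by
  funext i
  fin_cases i <;>
    simp [vee, hat, Matrix.mul_apply, Matrix.mulVec, dotProduct,
      Matrix.vecMul, Matrix.trace, Matrix.diag, Fin.sum_univ_three, Matrix.one_apply] <;>
    ring
end

section
/- Let R, R_d ∈ SO(3) and e_R = ½(R_dᵀR − RᵀR_d)^∨. Then ‖e_R‖² ≤ ½‖R − R_d‖². -/
open Matrix Real

/-
Put `B = R_dᵀ (R - R_d)`. Since `R_dᵀ R_d` is symmetric, `R_dᵀ R - Rᵀ R_d = B - Bᵀ`, and for a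
skew-symmetric `S` one has `‖S^∨‖² = ½‖S‖²`; hence `‖e_R‖² = ⅛‖B - Bᵀ‖²`. The parallelogram law
`‖B - Bᵀ‖² + ‖B + Bᵀ‖² = 2‖B‖² + 2‖Bᵀ‖²` gives `‖B - Bᵀ‖² ≤ 4‖B‖²`, and `‖B‖ = ‖R - R_d‖`
because `R_d` is orthogonal.
-/

namespace Matrix

variable {m n : Type*}

theorem trace_transpose_mul_self_nonneg [Fintype m] [Fintype n] (A : Matrix m n ℝ) :
    0 ≤ (Aᵀ * A).trace := by
  simpa using (posSemidef_conjTranspose_mul_self A).trace_nonneg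

theorem trace_transpose_mul_self_sub_transpose_le [Fintype n] (B : Matrix n n ℝ) :
    ((B - Bᵀ)ᵀ * (B - Bᵀ)).trace ≤ 4 * (Bᵀ * B).trace := by
  have parallelogram : (B - Bᵀ)ᵀ * (B - Bᵀ) + (B + Bᵀ)ᵀ * (B + Bᵀ) = 2 • (Bᵀ * B + B * Bᵀ) := by
    simp only [transpose_sub, transpose_add, transpose_transpose]
    noncomm_ring
  have h := congrArg trace parallelogram
  rw [trace_add, trace_smul, trace_add, trace_mul_comm B Bᵀ, nsmul_eq_mul, Nat.cast_ofNat] at h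
  linarith [trace_transpose_mul_self_nonneg (B + Bᵀ)]

theorem transpose_mul_sub_transpose_mul [Fintype m] {α : Type*} [CommRing α]
    (A B : Matrix m n α) :
    Bᵀ * A - Aᵀ * B = Bᵀ * (A - B) - (Bᵀ * (A - B))ᵀ := by
  simp only [Matrix.mul_sub, transpose_sub, transpose_mul, transpose_transpose]
  abel

end Matrix

theorem two_mul_vee_sub_transpose_dotProduct_self (A : Matrix (Fin 3) (Fin 3) ℝ) :
    2 * (vee (A - Aᵀ) ⬝ᵥ vee (A - Aᵀ)) = ((A - Aᵀ)ᵀ * (A - Aᵀ)).trace := by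
  simp only [dotProduct, vee, Matrix.sub_apply, transpose_apply, Fin.sum_univ_three, cons_val_zero,
    cons_val_one, cons_val, trace, transpose_sub, transpose_transpose, diag_apply, mul_apply,
    sub_self, mul_zero, zero_add, add_zero]
  ring

theorem fnorm_sq (A : Matrix (Fin 3) (Fin 3) ℝ) : fnorm A ^ 2 = (Aᵀ * A).trace :=
  sq_sqrt (trace_transpose_mul_self_nonneg A)

theorem enorm_sq (v : Fin 3 → ℝ) : _root_.enorm v ^ 2 = v ⬝ᵥ v :=
  sq_sqrt (by simpa using dotProduct_star_self_nonneg v)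

theorem eR_le_ER_general (R Rd : Matrix (Fin 3) (Fin 3) ℝ) (hRd : SO3 Rd) :
    (_root_.enorm ((1 / 2 : ℝ) • vee (Rdᵀ * R - Rᵀ * Rd))) ^ 2 ≤
      (1 / 2) * fnorm (R - Rd) ^ 2 := by
  set B := Rdᵀ * (R - Rd)
  have hB : (Bᵀ * B).trace = ((R - Rd)ᵀ * (R - Rd)).trace := by
    rw [transpose_mul, transpose_transpose, mul_assoc, ← mul_assoc Rd,
      mul_eq_one_comm.mp hRd.1, one_mul]
  calc _ = (1 / 4) * (vee (B - Bᵀ) ⬝ᵥ vee (B - Bᵀ)) := by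
        rw [enorm_sq, transpose_mul_sub_transpose_mul, smul_dotProduct, dotProduct_smul,
          smul_eq_mul, smul_eq_mul]
        ring
    _ = (1 / 8) * ((B - Bᵀ)ᵀ * (B - Bᵀ)).trace := by
        rw [← two_mul_vee_sub_transpose_dotProduct_self]
        ring
    _ ≤ (1 / 2) * (Bᵀ * B).trace := by linarith [trace_transpose_mul_self_sub_transpose_le B]
    _ = (1 / 2) * fnorm (R - Rd) ^ 2 := by rw [fnorm_sq, hB]

theorem eR_le_ER (R Rd : Matrix (Fin 3) (Fin 3) ℝ) (hR : SO3 R) (hRd : SO3 Rd) :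
    (_root_.enorm ((1 / 2 : ℝ) • vee (Rdᵀ * R - Rᵀ * Rd))) ^ 2 ≤
      (1 / 2) * fnorm (R - Rd) ^ 2 :=
  eR_le_ER_general R Rd hRd
end

section
/- For any Q ∈ SO(3), the matrix C(Q) = ½(tr(Q)·I − Q) has operator 2-norm at most 1, i.e., ‖C(Q)x‖ ≤ ‖x‖ for all x ∈ ℝ³. -/
open Matrix Real

/-!
Write `t = tr Q`. Since `Q` is orthogonal, `‖(t I - Q) x‖² = t² ‖x‖² - 2 t ⟨x, Q x⟩ + ‖x‖²`,
so everything hinges on how `t` and `⟨x, Q x⟩` can be related. Cayley–Hamilton together with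
`adj Q = Qᵀ` gives `Q² = t Q - t I + Qᵀ`; squaring the skew part `Q - Qᵀ = hat w` then yields the
Rodrigues-type identity `w wᵀ = (t + 1) (Q + Qᵀ - (t - 1) I)`. Its trace gives `t ∈ [-1, 3]`, and
its quadratic form gives `(t + 1) (2 ⟨x, Q x⟩ - (t - 1) ‖x‖²) = ⟨w, x⟩² ≥ 0`. With
`|⟨x, Q x⟩| ≤ ‖x‖²` this is enough to bound `t² ‖x‖² - 2 t ⟨x, Q x⟩ + ‖x‖²` by `4 ‖x‖²`.
-/

theorem Matrix.adjugate_fin_three_eq {α : Type*} [CommRing α] (A : Matrix (Fin 3) (Fin 3) α) :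
    A.adjugate = A * A - A.trace • A + A.adjugate.trace • 1 := by
  ext i j
  fin_cases i <;> fin_cases j <;>
    simp [adjugate_fin_three, trace_fin_three, Matrix.mul_apply, Fin.sum_univ_three] <;> ring

theorem dotProduct_self_nonneg {n : Type*} [Fintype n] (v : n → ℝ) : 0 ≤ v ⬝ᵥ v :=
  Finset.sum_nonneg fun i _ => mul_self_nonneg (v i)

section Orthogonal

variable {n : Type*} [Fintype n] [DecidableEq n] {R : Matrix n n ℝ}

theorem dotProduct_mulVec_self_of_transpose_mul_self (hR : Rᵀ * R = 1) (x : n → ℝ) :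
    R *ᵥ x ⬝ᵥ R *ᵥ x = x ⬝ᵥ x := by
  rw [dotProduct_mulVec, ← vecMul_transpose, vecMul_vecMul, hR, vecMul_one]

theorem abs_dotProduct_mulVec_le_of_transpose_mul_self (hR : Rᵀ * R = 1) (x : n → ℝ) :
    |x ⬝ᵥ R *ᵥ x| ≤ x ⬝ᵥ x := by
  have expand : ∀ ε : ℝ, (x + ε • R *ᵥ x) ⬝ᵥ (x + ε • R *ᵥ x)
      = (1 + ε ^ 2) * (x ⬝ᵥ x) + 2 * ε * (x ⬝ᵥ R *ᵥ x) := fun ε => by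
    simp only [add_dotProduct, dotProduct_add, smul_dotProduct, dotProduct_smul, smul_eq_mul,
      dotProduct_mulVec_self_of_transpose_mul_self hR, dotProduct_comm (R *ᵥ x) x]
    ring
  have hnonneg := fun ε => expand ε ▸ dotProduct_self_nonneg (x + ε • R *ᵥ x)
  rw [abs_le]
  constructor <;> linarith [hnonneg 1, hnonneg (-1)]

end Orthogonal

theorem hat_mul_hat (v : Fin 3 → ℝ) : hat v * hat v = vecMulVec v v - (v ⬝ᵥ v) • 1 := by
  ext i j
  fin_cases i <;> fin_cases j <;>
    simp [hat, vecMulVec_apply, dotProduct, Fin.sum_univ_three, Matrix.mul_apply] <;> ring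

theorem hat_vee_of_transpose_eq_neg {A : Matrix (Fin 3) (Fin 3) ℝ} (hA : Aᵀ = -A) :
    hat (vee A) = A := by
  have h : ∀ i j, A j i = -A i j := fun i j => by simpa using congrFun (congrFun hA i) j
  ext i j
  fin_cases i <;> fin_cases j <;> simp [hat, vee, h 0 1, h 0 2, h 1 2] <;>
    linarith [h 0 0, h 1 1, h 2 2]

theorem vecMulVec_vee_eq_mul_self_add {A : Matrix (Fin 3) (Fin 3) ℝ} (hA : Aᵀ = -A) :
    vecMulVec (vee A) (vee A) = A * A + (vee A ⬝ᵥ vee A) • 1 := by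
  rw [← hat_vee_of_transpose_eq_neg hA, hat_mul_hat, hat_vee_of_transpose_eq_neg hA]
  abel

namespace SO3

variable {Q : Matrix (Fin 3) (Fin 3) ℝ}

theorem adjugate_eq_transpose (hQ : SO3 Q) : Q.adjugate = Qᵀ := by
  calc Q.adjugate = (Qᵀ * Q) * Q.adjugate := by rw [hQ.1, Matrix.one_mul]
    _ = Qᵀ := by rw [Matrix.mul_assoc, mul_adjugate, hQ.2, one_smul, Matrix.mul_one]

theorem mul_self (hQ : SO3 Q) : Q * Q = Q.trace • Q - Q.trace • 1 + Qᵀ := by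
  have h := Q.adjugate_fin_three_eq
  rw [adjugate_eq_transpose hQ, trace_transpose] at h
  rw [h]; abel

theorem sub_transpose_mul_self (hQ : SO3 Q) :
    (Q - Qᵀ) * (Q - Qᵀ) = (Q.trace + 1) • (Q + Qᵀ) - (2 * (Q.trace + 1)) • 1 := by
  have hsq := mul_self hQ
  have hsqT : Qᵀ * Qᵀ = Q.trace • Qᵀ - Q.trace • 1 + Q := by
    rw [← transpose_mul, hsq]; simp
  have hQQT : Q * Qᵀ = 1 := mul_eq_one_comm.mp hQ.1
  rw [sub_mul, mul_sub, mul_sub, hsq, hsqT, hQQT, hQ.1]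
  module

theorem dotProduct_vee_sub_transpose (hQ : SO3 Q) :
    vee (Q - Qᵀ) ⬝ᵥ vee (Q - Qᵀ) = (Q.trace + 1) * (3 - Q.trace) := by
  have h := congrArg trace (vecMulVec_vee_eq_mul_self_add (A := Q - Qᵀ) (by simp))
  rw [sub_transpose_mul_self hQ] at h
  simp only [trace_vecMulVec, trace_add, trace_sub, trace_smul, trace_transpose, trace_one,
    Fintype.card_fin, Nat.cast_ofNat, smul_eq_mul] at h
  linarith

theorem vecMulVec_vee_sub_transpose (hQ : SO3 Q) :
    vecMulVec (vee (Q - Qᵀ)) (vee (Q - Qᵀ)) =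
      (Q.trace + 1) • (Q + Qᵀ - (Q.trace - 1) • 1) := by
  rw [vecMulVec_vee_eq_mul_self_add (by simp), sub_transpose_mul_self hQ,
    dotProduct_vee_sub_transpose hQ]
  module

theorem trace_mem_Icc (hQ : SO3 Q) : Q.trace ∈ Set.Icc (-1) 3 := by
  have h := dotProduct_vee_sub_transpose hQ
  have h0 := dotProduct_self_nonneg (vee (Q - Qᵀ))
  constructor <;> nlinarith

theorem sq_vee_sub_transpose_dotProduct (hQ : SO3 Q) (x : Fin 3 → ℝ) :
    (vee (Q - Qᵀ) ⬝ᵥ x) ^ 2 =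
      (Q.trace + 1) * (2 * (x ⬝ᵥ Q *ᵥ x) - (Q.trace - 1) * (x ⬝ᵥ x)) := by
  have h := congrArg (fun M => x ⬝ᵥ M *ᵥ x) (vecMulVec_vee_sub_transpose hQ)
  simp only [dotProduct_mulVec x (vecMulVec _ _), vecMul_vecMulVec, smul_dotProduct,
    smul_mulVec, add_mulVec, sub_mulVec, one_mulVec, dotProduct_smul, dotProduct_add,
    dotProduct_sub, smul_eq_mul] at h
  rw [dotProduct_mulVec x Qᵀ, vecMul_transpose, dotProduct_comm (Q *ᵥ x) x,
    dotProduct_comm x (vee _)] at h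
  rw [sq, h]
  ring

end SO3

theorem dotProduct_self_smul_sub_mulVec {n : Type*} [Fintype n] [DecidableEq n]
    (A : Matrix n n ℝ) (c t : ℝ) (x : n → ℝ) :
    (c • (t • (1 : Matrix n n ℝ) - A)) *ᵥ x ⬝ᵥ (c • (t • (1 : Matrix n n ℝ) - A)) *ᵥ x
      = c ^ 2 * (t ^ 2 * (x ⬝ᵥ x) - 2 * t * (x ⬝ᵥ A *ᵥ x) + A *ᵥ x ⬝ᵥ A *ᵥ x) := by
  simp only [smul_mulVec, sub_mulVec, one_mulVec, smul_dotProduct, dotProduct_smul,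
    sub_dotProduct, dotProduct_sub, smul_eq_mul, dotProduct_comm (A *ᵥ x) x]
  ring

theorem sq_mul_sub_two_mul_mul_add_le {t n u : ℝ} (ht : t ∈ Set.Icc (-1) 3) (hu : |u| ≤ n)
    (h : 0 ≤ (t + 1) * (2 * u - (t - 1) * n)) : t ^ 2 * n - 2 * t * u + n ≤ 4 * n := by
  obtain ⟨ht₁, ht₃⟩ := ht
  obtain ⟨hu₁, hu₂⟩ := abs_le.mp hu
  -- for `t ≥ 0` the last hypothesis is the binding one, for `t < 0` it is `u ≤ n`
  rcases le_or_gt 0 t with ht₀ | ht₀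
  · have h2u : (t - 1) * n ≤ 2 * u := le_of_mul_le_mul_left (by linarith) (by linarith : 0 < t + 1)
    nlinarith
  · nlinarith

theorem C_matrix_norm_le_one (Q : Matrix (Fin 3) (Fin 3) ℝ) (hQ : SO3 Q) (x : Fin 3 → ℝ) :
    _root_.enorm ((((1 / 2 : ℝ) • (Q.trace • (1 : Matrix (Fin 3) (Fin 3) ℝ) - Q)).mulVec x)) ≤
      _root_.enorm x := by
  have hbound := sq_mul_sub_two_mul_mul_add_le (SO3.trace_mem_Icc hQ)
    (abs_dotProduct_mulVec_le_of_transpose_mul_self hQ.1 x)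
    (SO3.sq_vee_sub_transpose_dotProduct hQ x ▸ sq_nonneg _)
  unfold _root_.enorm
  apply Real.sqrt_le_sqrt
  rw [dotProduct_self_smul_sub_mulVec, dotProduct_mulVec_self_of_transpose_mul_self hQ.1]
  linarith
end

section
/- Let 0 < a < 1 and let k_R, k_Ω > 0 satisfy 0 < μ < 4(1−a)k_R k_Ω / (4(1−a)k_R + k_Ω²). Then μ < √k_R, and the 2×2 symmetric matrix W₃ = [[(1−a)μ k_R/2, −μ k_Ω/(2√2)],[−μ k_Ω/(2√2), k_Ω − μ]] is positive definite. -/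
open Matrix Real

/-! With `c = (1 - a) k_R`, the determinant of `W₃` equals `μ / 8 · (4 c k_Ω - μ (4 c + k_Ω²))`,
so the hypothesis on `μ` is exactly positivity of the determinant. By AM–GM,
`4 c + k_Ω² ≥ 4 √c k_Ω`, so the same bound on `μ` is at most `√c ≤ √k_R`. -/

theorem Matrix.posDef_of_fin_two {A B C : ℝ} (hA : 0 < A) (hdet : 0 < A * C - B ^ 2) :
    (!![A, B; B, C] : Matrix (Fin 2) (Fin 2) ℝ).PosDef := by
  refine .of_dotProduct_mulVec_pos ?_ fun x hx ↦ ?_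
  · ext i j
    fin_cases i <;> fin_cases j <;> rfl
  -- completing the square: `A · xᵀ M x = (A x₀ + B x₁)² + (A C - B²) x₁²`
  have hsq : 0 < (A * x 0 + B * x 1) ^ 2 + (A * C - B ^ 2) * x 1 ^ 2 := by
    rcases eq_or_ne (x 1) 0 with h1 | h1
    · have h0 : x 0 ≠ 0 := fun h0 ↦ hx (funext fun i ↦ by fin_cases i <;> simp [h0, h1])
      simpa [h1] using sq_pos_of_ne_zero (mul_ne_zero hA.ne' h0)
    · positivity
  simp only [mulVec, dotProduct, Fin.sum_univ_two, cons_val', cons_val_zero, cons_val_one,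
    empty_val', cons_val_fin_one, of_apply, star_trivial]
  nlinarith

theorem four_mul_mul_div_add_sq_le_sqrt {c : ℝ} (hc : 0 ≤ c) (k : ℝ) :
    4 * c * k / (4 * c + k ^ 2) ≤ √c := by
  have hgap : √c * (4 * c + k ^ 2) - 4 * c * k = √c * (2 * √c - k) ^ 2 := by
    linear_combination (4 * k - 4 * √c) * sq_sqrt hc
  have hgap_nonneg : 0 ≤ √c * (2 * √c - k) ^ 2 := by positivity
  exact div_le_of_le_mul₀ (by positivity) (sqrt_nonneg c) (by linarith)

theorem W3_posdef_general (a kR kΩ μ : ℝ) (ha : 0 < a) (ha1 : a < 1)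
    (hkR : 0 < kR) (hμ : 0 < μ)
    (hμ' : μ < 4 * (1 - a) * kR * kΩ / (4 * (1 - a) * kR + kΩ ^ 2)) :
    μ < Real.sqrt kR ∧
    (!![(1 - a) * μ * kR / 2, -μ * kΩ / (2 * Real.sqrt 2);
        -μ * kΩ / (2 * Real.sqrt 2), kΩ - μ] :
      Matrix (Fin 2) (Fin 2) ℝ).PosDef := by
  set c := (1 - a) * kR with hc_def
  have hc : 0 < c := mul_pos (by linarith) hkR
  have hcR : c ≤ kR := mul_le_of_le_one_left hkR.le (by linarith)
  have hμc : μ < 4 * c * kΩ / (4 * c + kΩ ^ 2) := by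
    rw [hc_def]
    convert hμ' using 2 <;> ring
  refine ⟨?_, ?_⟩
  · calc μ < 4 * c * kΩ / (4 * c + kΩ ^ 2) := hμc
      _ ≤ √c := four_mul_mul_div_add_sq_le_sqrt hc.le kΩ
      _ ≤ √kR := sqrt_le_sqrt hcR
  · have hgap : 0 < 4 * c * kΩ - μ * (4 * c + kΩ ^ 2) :=
      sub_pos.mpr ((lt_div_iff₀ (by positivity)).mp hμc)
    have hB : (-μ * kΩ / (2 * √2)) ^ 2 = μ ^ 2 * kΩ ^ 2 / 8 := by
      rw [div_pow, mul_pow 2, sq_sqrt zero_le_two]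
      ring
    have hdet : (1 - a) * μ * kR / 2 * (kΩ - μ) - (-μ * kΩ / (2 * √2)) ^ 2
        = μ / 8 * (4 * c * kΩ - μ * (4 * c + kΩ ^ 2)) := by
      rw [hB, hc_def]
      ring
    refine Matrix.posDef_of_fin_two (by positivity) ?_
    rw [hdet]
    positivity

theorem W3_posdef (a kR kΩ μ : ℝ) (ha : 0 < a) (ha1 : a < 1)
    (hkR : 0 < kR) (hkΩ : 0 < kΩ) (hμ : 0 < μ)
    (hμ' : μ < 4 * (1 - a) * kR * kΩ / (4 * (1 - a) * kR + kΩ ^ 2)) :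
    μ < Real.sqrt kR ∧
    (!![(1 - a) * μ * kR / 2, -μ * kΩ / (2 * Real.sqrt 2);
        -μ * kΩ / (2 * Real.sqrt 2), kΩ - μ] :
      Matrix (Fin 2) (Fin 2) ℝ).PosDef :=
  W3_posdef_general a kR kΩ μ ha ha1 hkR hμ hμ'
end
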